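/- arXiv:2107.04987 — 4 statements merged into one kernel-verified Lean document; each statement's English description precedes it below -/
import Mathlib

section
/- Let (Ω, 𝓕, μ) be a probability space and 𝓖 ⊆ 𝓕 a sub-σ-algebra. Let W : Ω → ℝ be measurable with W ≥ 0 a.e., and X : Ω → ℝ measurable, such that W, W·X and W·X² are integrable, and the conditional expectation satisfies μ[W | 𝓖] > 0 a.e. Define B* = μ[W·X | 𝓖] / μ[W | 𝓖]. Then for every 𝓖-measurable B : Ω → ℝ such that W·B², W·X·B, W·(B*)² and W·X·B* are integrable, ∫ W·(X − B*)² dμ ≤ ∫ W·(X − B)² dμ. That is, the ratio of weighted conditional expectations is the minimum-variance baseline among all 𝓖-measurable functions. -/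
open MeasureTheory

private lemma pullout_integral
    {Ω : Type*} {mΩ : MeasurableSpace Ω} (μ : Measure Ω) [IsProbabilityMeasure μ]
    (m : MeasurableSpace Ω) (hm : m ≤ mΩ)
    (g F : Ω → ℝ) (hg : StronglyMeasurable[m] g)
    (hF : Integrable F μ) (hgF : Integrable (fun ω => g ω * F ω) μ) :
    ∫ ω, g ω * F ω ∂μ = ∫ ω, g ω * (μ[F|m]) ω ∂μ := by
  have h := condExp_mul_of_stronglyMeasurable_left (μ := μ) hg hgF hF
  calc ∫ ω, g ω * F ω ∂μ = ∫ ω, (μ[fun ω => g ω * F ω|m]) ω ∂μ :=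
        (integral_condExp hm (f := fun ω => g ω * F ω)).symm
    _ = ∫ ω, g ω * (μ[F|m]) ω ∂μ := integral_congr_ae h

private lemma pullout_integrable
    {Ω : Type*} {mΩ : MeasurableSpace Ω} (μ : Measure Ω) [IsProbabilityMeasure μ]
    (m : MeasurableSpace Ω)
    (g F : Ω → ℝ) (hg : StronglyMeasurable[m] g)
    (hF : Integrable F μ) (hgF : Integrable (fun ω => g ω * F ω) μ) :
    Integrable (fun ω => g ω * (μ[F|m]) ω) μ := by
  have h := condExp_mul_of_stronglyMeasurable_left (μ := μ) hg hgF hF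
  exact (integrable_condExp (f := fun ω => g ω * F ω)).congr h

/-- The ratio of weighted conditional expectations `B* = μ[W·X | 𝓖] / μ[W | 𝓖]` minimizes the
weighted quadratic objective `∫ W·(X − B)² dμ` over all `𝓖`-measurable functions `B`. -/
theorem optimal_conditional_baseline
    {Ω : Type*} (m : MeasurableSpace Ω) {mΩ : MeasurableSpace Ω} (μ : Measure Ω) [IsProbabilityMeasure μ]
    (hm : m ≤ mΩ)
    (W X : Ω → ℝ) (hWmeas : Measurable W) (hXmeas : Measurable X)
    (hWnonneg : ∀ᵐ ω ∂μ, 0 ≤ W ω)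
    (hW : Integrable W μ)
    (hWX : Integrable (fun ω => W ω * X ω) μ)
    (hWX2 : Integrable (fun ω => W ω * X ω ^ 2) μ)
    (hcondpos : ∀ᵐ ω ∂μ, 0 < (μ[W|m]) ω) :
    ∀ B : Ω → ℝ, Measurable[m] B →
      Integrable (fun ω => W ω * B ω ^ 2) μ →
      Integrable (fun ω => W ω * X ω * B ω) μ →
      Integrable (fun ω =>
        W ω * ((μ[fun ω' => W ω' * X ω'|m]) ω / (μ[W|m]) ω) ^ 2) μ →
      Integrable (fun ω =>
        W ω * X ω * ((μ[fun ω' => W ω' * X ω'|m]) ω / (μ[W|m]) ω)) μ →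
      ∫ ω, W ω * (X ω - (μ[fun ω' => W ω' * X ω'|m]) ω / (μ[W|m]) ω) ^ 2 ∂μ ≤
        ∫ ω, W ω * (X ω - B ω) ^ 2 ∂μ := by
  intro B hBmeas hWB2 hWXB hWBs2 hWXBs
  set Y : Ω → ℝ := μ[fun ω' => W ω' * X ω'|m] with hY
  set Z : Ω → ℝ := μ[W|m] with hZ
  set Bs : Ω → ℝ := fun ω => Y ω / Z ω with hBs
  have hYsm : StronglyMeasurable[m] Y := stronglyMeasurable_condExp
  have hZsm : StronglyMeasurable[m] Z := stronglyMeasurable_condExp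
  have hBssm : StronglyMeasurable[m] Bs := (hYsm.measurable.div hZsm.measurable).stronglyMeasurable
  have hBsm : StronglyMeasurable[m] B := hBmeas.stronglyMeasurable
  -- a.e. facts
  have hYBsZ : ∀ᵐ ω ∂μ, Y ω = Bs ω * Z ω := by
    filter_upwards [hcondpos] with ω hω
    rw [hBs]
    field_simp
  -- pullout equalities
  have eWXB : ∫ ω, W ω * X ω * B ω ∂μ = ∫ ω, B ω * Y ω ∂μ := by
    rw [← pullout_integral μ m hm B (fun ω => W ω * X ω) hBsm hWX
      (hWXB.congr (by filter_upwards with ω; ring))]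
    exact integral_congr_ae (by filter_upwards with ω; ring)
  have eWB2 : ∫ ω, W ω * B ω ^ 2 ∂μ = ∫ ω, B ω ^ 2 * Z ω ∂μ := by
    rw [← pullout_integral μ m hm (fun ω => B ω ^ 2) W (hBsm.pow 2) hW
      (hWB2.congr (by filter_upwards with ω; ring))]
    exact integral_congr_ae (by filter_upwards with ω; ring)
  have eWXBs : ∫ ω, W ω * X ω * Bs ω ∂μ = ∫ ω, Bs ω * Y ω ∂μ := by
    rw [← pullout_integral μ m hm Bs (fun ω => W ω * X ω) hBssm hWX
      (hWXBs.congr (by filter_upwards with ω; ring))]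
    exact integral_congr_ae (by filter_upwards with ω; ring)
  have eWBs2 : ∫ ω, W ω * Bs ω ^ 2 ∂μ = ∫ ω, Bs ω ^ 2 * Z ω ∂μ := by
    rw [← pullout_integral μ m hm (fun ω => Bs ω ^ 2) W (hBssm.pow 2) hW
      (hWBs2.congr (by filter_upwards with ω; ring))]
    exact integral_congr_ae (by filter_upwards with ω; ring)
  -- integrabilities of the conditional versions
  have hB2Z : Integrable (fun ω => B ω ^ 2 * Z ω) μ :=
    pullout_integrable μ m (fun ω => B ω ^ 2) W (hBsm.pow 2) hW
      (hWB2.congr (by filter_upwards with ω; ring))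
  have hBY : Integrable (fun ω => B ω * Y ω) μ :=
    pullout_integrable μ m B (fun ω => W ω * X ω) hBsm hWX
      (hWXB.congr (by filter_upwards with ω; ring))
  have hBs2Z : Integrable (fun ω => Bs ω ^ 2 * Z ω) μ :=
    pullout_integrable μ m (fun ω => Bs ω ^ 2) W (hBssm.pow 2) hW
      (hWBs2.congr (by filter_upwards with ω; ring))
  have hBsY : Integrable (fun ω => Bs ω * Y ω) μ :=
    pullout_integrable μ m Bs (fun ω => W ω * X ω) hBssm hWX
      (hWXBs.congr (by filter_upwards with ω; ring))
  -- ∫ Bs Y = ∫ Bs² Z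
  have eBsY : ∫ ω, Bs ω * Y ω ∂μ = ∫ ω, Bs ω ^ 2 * Z ω ∂μ := by
    refine integral_congr_ae ?_
    filter_upwards [hYBsZ] with ω hω
    rw [hω]; ring
  -- expansion of both sides
  have expand : ∀ C : Ω → ℝ, Integrable (fun ω => W ω * C ω ^ 2) μ →
      Integrable (fun ω => W ω * X ω * C ω) μ →
      ∫ ω, W ω * (X ω - C ω) ^ 2 ∂μ =
        ∫ ω, W ω * X ω ^ 2 ∂μ - 2 * ∫ ω, W ω * X ω * C ω ∂μ
          + ∫ ω, W ω * C ω ^ 2 ∂μ := by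
    intro C hWC2 hWXC
    have : (fun ω => W ω * (X ω - C ω) ^ 2)
        = fun ω => (W ω * X ω ^ 2 - 2 * (W ω * X ω * C ω)) + W ω * C ω ^ 2 := by
      funext ω; ring
    have h1 : Integrable (fun ω => W ω * X ω ^ 2 - 2 * (W ω * X ω * C ω)) μ :=
      hWX2.sub (hWXC.const_mul 2)
    rw [this, integral_add h1 hWC2,
      integral_sub hWX2 (hWXC.const_mul 2), integral_const_mul]
  rw [expand B hWB2 hWXB, expand Bs hWBs2 hWXBs, eWXB, eWB2, eWXBs, eWBs2, eBsY]
  -- remains: ∫X² - 2∫Bs²Z + ∫Bs²Z ≤ ∫X² - 2∫BY + ∫B²Z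
  have key : 0 ≤ ∫ ω, (B ω ^ 2 * Z ω - 2 * (B ω * Y ω) + Bs ω ^ 2 * Z ω) ∂μ := by
    refine integral_nonneg_of_ae ?_
    filter_upwards [hYBsZ, hcondpos] with ω h1 h2
    rw [h1]
    have : B ω ^ 2 * Z ω - 2 * (B ω * (Bs ω * Z ω)) + Bs ω ^ 2 * Z ω
        = Z ω * (B ω - Bs ω) ^ 2 := by ring
    rw [this]
    exact mul_nonneg h2.le (sq_nonneg _)
  have h2 : Integrable (fun ω => B ω ^ 2 * Z ω - 2 * (B ω * Y ω)) μ :=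
    hB2Z.sub (hBY.const_mul 2)
  rw [integral_add h2 hBs2Z,
    integral_sub hB2Z (hBY.const_mul 2), integral_const_mul] at key
  linarith
end

section
/- Let (Ω, 𝓕, μ) be a probability space, 𝓖 ⊆ 𝓕 a sub-σ-algebra, d ≥ 1, and for each j ∈ {1,…,d} let W_j : Ω → ℝ be measurable with W_j ≥ 0 a.e., and let X : Ω → ℝ be measurable, such that for each j the functions W_j, W_j·X, W_j·X² are integrable and μ[W_j | 𝓖] > 0 a.e. Define C*_j = μ[W_j·X | 𝓖] / μ[W_j | 𝓖] for each j. Then for every 𝓖-measurable C : Ω → ℝ^d such that all products W_j·C_j², W_j·X·C_j, W_j·(C*_j)², W_j·X·C*_j are integrable, Σ_{j=1}^d ∫ W_j·(X − C*_j)² dμ ≤ Σ_{j=1}^d ∫ W_j·(X − C_j)² dμ. Moreover the minimization decouples: C* simultaneously minimizes each summand. -/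
open MeasureTheory

lemma baseline_key
    {Ω : Type*} {mΩ : MeasurableSpace Ω} (μ : Measure Ω) [IsProbabilityMeasure μ]
    (m : MeasurableSpace Ω) (hm : m ≤ mΩ)
    (W X : Ω → ℝ)
    (hWmeas : Measurable[mΩ] W) (hXmeas : Measurable[mΩ] X)
    (hWnonneg : ∀ᵐ ω ∂μ, 0 ≤ W ω)
    (hW : Integrable W μ)
    (hWX : Integrable (fun ω => W ω * X ω) μ)
    (hWX2 : Integrable (fun ω => W ω * X ω ^ 2) μ)
    (hcondpos : ∀ᵐ ω ∂μ, 0 < (μ[W|m]) ω)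
    (c : Ω → ℝ) (hc : StronglyMeasurable[m] c)
    (hWc2 : Integrable (fun ω => W ω * c ω ^ 2) μ)
    (hWXc : Integrable (fun ω => W ω * X ω * c ω) μ)
    (hWcs2 : Integrable (fun ω => W ω * ((μ[fun ω' => W ω' * X ω'|m]) ω / (μ[W|m]) ω) ^ 2) μ)
    (hWXcs : Integrable (fun ω => W ω * X ω * ((μ[fun ω' => W ω' * X ω'|m]) ω / (μ[W|m]) ω)) μ) :
    ∫ ω, W ω * (X ω - (μ[fun ω' => W ω' * X ω'|m]) ω / (μ[W|m]) ω) ^ 2 ∂μ ≤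
      ∫ ω, W ω * (X ω - c ω) ^ 2 ∂μ := by
  set cs : Ω → ℝ := fun ω => (μ[fun ω' => W ω' * X ω'|m]) ω / (μ[W|m]) ω with hcs_def
  have hcs_sm : StronglyMeasurable[m] cs :=
    (stronglyMeasurable_condExp.measurable.div stronglyMeasurable_condExp.measurable).stronglyMeasurable
  have hcs_aesm : AEStronglyMeasurable[mΩ] cs μ := (hcs_sm.mono hm).aestronglyMeasurable (μ := μ)
  have hc_aesm : AEStronglyMeasurable[mΩ] c μ := (hc.mono hm).aestronglyMeasurable (μ := μ)
  have hW_aesm : AEStronglyMeasurable[mΩ] W μ :=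
    hWmeas.stronglyMeasurable.aestronglyMeasurable (μ := μ)
  -- AM-GM style integrability
  have hprod : ∀ f g : Ω → ℝ, AEStronglyMeasurable[mΩ] f μ → AEStronglyMeasurable[mΩ] g μ →
      Integrable (fun ω => W ω * f ω ^ 2) μ → Integrable (fun ω => W ω * g ω ^ 2) μ →
      Integrable (fun ω => W ω * f ω * g ω) μ := by
    intro f g hf hg h1 h2
    have t1 : AEStronglyMeasurable[mΩ] (W * f) μ := hW_aesm.mul hf
    have t2 : AEStronglyMeasurable[mΩ] (W * f * g) μ := t1.mul hg
    have hmeasfg : AEStronglyMeasurable[mΩ] (fun ω => W ω * f ω * g ω) μ := t2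
    refine Integrable.mono' ((h1.add h2).div_const 2) hmeasfg ?_
    filter_upwards [hWnonneg] with ω hω
    rw [Real.norm_eq_abs, abs_mul, abs_mul, abs_of_nonneg hω]
    simp only [Pi.add_apply]
    have h2fg : 2 * (|f ω| * |g ω|) ≤ f ω ^ 2 + g ω ^ 2 := by
      nlinarith [sq_nonneg (|f ω| - |g ω|), sq_abs (f ω), sq_abs (g ω)]
    nlinarith [mul_le_mul_of_nonneg_left h2fg hω]
  have hWone : Integrable (fun ω => W ω * (1 : ℝ) ^ 2) μ := by simpa using hW
  have hWcs : Integrable (fun ω => W ω * cs ω) μ := by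
    simpa using hprod cs (fun _ => (1 : ℝ)) hcs_aesm aestronglyMeasurable_const hWcs2 hWone
  have hWcsc : Integrable (fun ω => W ω * cs ω * c ω) μ :=
    hprod cs c hcs_aesm hc_aesm hWcs2 hWc2
  have hWcscs : Integrable (fun ω => W ω * cs ω * cs ω) μ := by
    have : (fun ω => W ω * cs ω * cs ω) = fun ω => W ω * cs ω ^ 2 := by funext ω; ring
    rw [this]; exact hWcs2
  -- key orthogonality
  have hkey : ∀ g : Ω → ℝ, StronglyMeasurable[m] g →
      Integrable (fun ω => W ω * X ω * g ω) μ →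
      Integrable (fun ω => W ω * cs ω * g ω) μ →
      ∫ ω, (W ω * X ω - W ω * cs ω) * g ω ∂μ = 0 := by
    intro g hg hg1 hg2
    set Y : Ω → ℝ := fun ω => W ω * X ω - W ω * cs ω with hY_def
    have hYint : Integrable Y μ := hWX.sub hWcs
    have hgY : Integrable (g * Y) μ := by
      have : (g * Y) = fun ω => W ω * X ω * g ω - W ω * cs ω * g ω := by
        funext ω; simp [hY_def]; ring
      rw [this]; exact hg1.sub hg2
    have hcsW : Integrable (cs * W) μ := by
      have : (cs * W) = fun ω => W ω * cs ω := by funext ω; simp [mul_comm]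
      rw [this]; exact hWcs
    have hWcs_ce : μ[(cs * W)|m] =ᵐ[μ] cs * μ[W|m] :=
      condExp_mul_of_stronglyMeasurable_left hcs_sm hcsW hW
    have hcsmul : cs * μ[W|m] =ᵐ[μ] μ[fun ω' => W ω' * X ω'|m] := by
      filter_upwards [hcondpos] with ω h
      simp only [Pi.mul_apply, hcs_def]
      exact div_mul_cancel₀ _ h.ne'
    have hY0 : μ[Y|m] =ᵐ[μ] 0 := by
      have hsub : μ[Y|m] =ᵐ[μ] μ[fun ω => W ω * X ω|m] - μ[fun ω => W ω * cs ω|m] := by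
        have : Y = (fun ω => W ω * X ω) - fun ω => W ω * cs ω := by funext ω; simp [hY_def]
        rw [this]; exact condExp_sub hWX hWcs m
      have hWcs_ce' : μ[fun ω => W ω * cs ω|m] =ᵐ[μ] μ[fun ω' => W ω' * X ω'|m] := by
        have : (fun ω => W ω * cs ω) = cs * W := by funext ω; simp [mul_comm]
        rw [this]; exact hWcs_ce.trans hcsmul
      filter_upwards [hsub, hWcs_ce'] with ω h1 h2
      simp only [h1, Pi.sub_apply, h2, sub_self, Pi.zero_apply]
    have hpull : μ[g * Y|m] =ᵐ[μ] g * μ[Y|m] := condExp_mul_of_stronglyMeasurable_left hg hgY hYint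
    have hzero : μ[g * Y|m] =ᵐ[μ] 0 := by
      filter_upwards [hpull, hY0] with ω h1 h2
      simp [h1, h2]
    have : ∫ ω, (g * Y) ω ∂μ = 0 := by
      rw [← integral_condExp hm, integral_congr_ae hzero]
      simp
    rw [← this]
    apply integral_congr_ae
    filter_upwards with ω
    simp [hY_def]; ring
  have e1 : ∫ ω, (W ω * X ω - W ω * cs ω) * cs ω ∂μ = 0 := by
    refine hkey cs hcs_sm hWXcs ?_
    exact hWcscs
  have e2 : ∫ ω, (W ω * X ω - W ω * cs ω) * c ω ∂μ = 0 :=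
    hkey c hc hWXc hWcsc
  have hZcs : Integrable (fun ω => (W ω * X ω - W ω * cs ω) * cs ω) μ := by
    have : (fun ω => (W ω * X ω - W ω * cs ω) * cs ω)
        = fun ω => W ω * X ω * cs ω - W ω * cs ω * cs ω := by funext ω; ring
    rw [this]; exact hWXcs.sub hWcscs
  have hZc : Integrable (fun ω => (W ω * X ω - W ω * cs ω) * c ω) μ := by
    have : (fun ω => (W ω * X ω - W ω * cs ω) * c ω)
        = fun ω => W ω * X ω * c ω - W ω * cs ω * c ω := by funext ω; ring
    rw [this]; exact hWXc.sub hWcsc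
  have hcross : ∫ ω, W ω * (X ω - cs ω) * (cs ω - c ω) ∂μ = 0 := by
    have hpt : (fun ω => W ω * (X ω - cs ω) * (cs ω - c ω))
        = fun ω => (W ω * X ω - W ω * cs ω) * cs ω - (W ω * X ω - W ω * cs ω) * c ω := by
      funext ω; ring
    rw [hpt, integral_sub hZcs hZc, e1, e2, sub_zero]
  have hint1 : Integrable (fun ω => W ω * (X ω - cs ω) ^ 2) μ := by
    have : (fun ω => W ω * (X ω - cs ω) ^ 2)
        = fun ω => W ω * X ω ^ 2 - 2 * (W ω * X ω * cs ω) + W ω * cs ω ^ 2 := by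
      funext ω; ring
    rw [this]; exact (hWX2.sub (hWXcs.const_mul 2)).add hWcs2
  have hint2 : Integrable (fun ω => W ω * (cs ω - c ω) ^ 2) μ := by
    have : (fun ω => W ω * (cs ω - c ω) ^ 2)
        = fun ω => W ω * cs ω ^ 2 - 2 * (W ω * cs ω * c ω) + W ω * c ω ^ 2 := by
      funext ω; ring
    rw [this]; exact (hWcs2.sub (hWcsc.const_mul 2)).add hWc2
  have hint3 : Integrable (fun ω => W ω * (X ω - cs ω) * (cs ω - c ω)) μ := by
    have : (fun ω => W ω * (X ω - cs ω) * (cs ω - c ω))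
        = fun ω => (W ω * X ω - W ω * cs ω) * cs ω - (W ω * X ω - W ω * cs ω) * c ω := by
      funext ω; ring
    rw [this]; exact hZcs.sub hZc
  have hdecomp : ∫ ω, W ω * (X ω - c ω) ^ 2 ∂μ
      = ∫ ω, W ω * (X ω - cs ω) ^ 2 ∂μ + ∫ ω, W ω * (cs ω - c ω) ^ 2 ∂μ := by
    have hpt : (fun ω => W ω * (X ω - c ω) ^ 2)
        = fun ω => (W ω * (X ω - cs ω) ^ 2 + W ω * (cs ω - c ω) ^ 2)
            + 2 * (W ω * (X ω - cs ω) * (cs ω - c ω)) := by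
      funext ω; ring
    have hsum12 : Integrable (fun ω => W ω * (X ω - cs ω) ^ 2 + W ω * (cs ω - c ω) ^ 2) μ :=
      hint1.add hint2
    have h2c : Integrable (fun ω => 2 * (W ω * (X ω - cs ω) * (cs ω - c ω))) μ :=
      hint3.const_mul 2
    rw [hpt, integral_add hsum12 h2c, integral_add hint1 hint2, integral_const_mul,
      hcross, mul_zero, add_zero]
  have hnn : 0 ≤ ∫ ω, W ω * (cs ω - c ω) ^ 2 ∂μ := by
    apply integral_nonneg_of_ae
    filter_upwards [hWnonneg] with ω h
    positivity
  linarith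

/-- Optimal coordinate-wise conditional baseline: with `C*_j = μ[W_j·X | 𝓖] / μ[W_j | 𝓖]`,
the total weighted quadratic objective `Σ_j ∫ W_j·(X − C_j)² dμ` over all `𝓖`-measurable
vector-valued `C : Ω → ℝ^d` is minimized at `C*`; moreover the minimization decouples, i.e.
`C*` simultaneously minimizes each summand. -/
theorem optimal_coordinatewise_conditional_baseline
    {Ω : Type*} (m : MeasurableSpace Ω) {mΩ : MeasurableSpace Ω} (μ : Measure Ω) [IsProbabilityMeasure μ]
    (hm : m ≤ mΩ)
    (d : ℕ) (hd : 1 ≤ d)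
    (W : Fin d → Ω → ℝ) (X : Ω → ℝ)
    (hWmeas : ∀ j, Measurable (W j)) (hXmeas : Measurable X)
    (hWnonneg : ∀ j, ∀ᵐ ω ∂μ, 0 ≤ W j ω)
    (hW : ∀ j, Integrable (W j) μ)
    (hWX : ∀ j, Integrable (fun ω => W j ω * X ω) μ)
    (hWX2 : ∀ j, Integrable (fun ω => W j ω * X ω ^ 2) μ)
    (hcondpos : ∀ j, ∀ᵐ ω ∂μ, 0 < (μ[W j|m]) ω) :
    ∀ C : Ω → Fin d → ℝ, Measurable[m] C →
      (∀ j, Integrable (fun ω => W j ω * C ω j ^ 2) μ) →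
      (∀ j, Integrable (fun ω => W j ω * X ω * C ω j) μ) →
      (∀ j, Integrable (fun ω =>
        W j ω * ((μ[fun ω' => W j ω' * X ω'|m]) ω / (μ[W j|m]) ω) ^ 2) μ) →
      (∀ j, Integrable (fun ω =>
        W j ω * X ω * ((μ[fun ω' => W j ω' * X ω'|m]) ω / (μ[W j|m]) ω)) μ) →
      (∑ j : Fin d,
          ∫ ω, W j ω * (X ω - (μ[fun ω' => W j ω' * X ω'|m]) ω / (μ[W j|m]) ω) ^ 2 ∂μ) ≤
        (∑ j : Fin d, ∫ ω, W j ω * (X ω - C ω j) ^ 2 ∂μ) ∧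
      (∀ j : Fin d,
        ∫ ω, W j ω * (X ω - (μ[fun ω' => W j ω' * X ω'|m]) ω / (μ[W j|m]) ω) ^ 2 ∂μ ≤
          ∫ ω, W j ω * (X ω - C ω j) ^ 2 ∂μ) := by
  intro C hC hC1 hC2 hC3 hC4
  have hper : ∀ j : Fin d,
      ∫ ω, W j ω * (X ω - (μ[fun ω' => W j ω' * X ω'|m]) ω / (μ[W j|m]) ω) ^ 2 ∂μ ≤
        ∫ ω, W j ω * (X ω - C ω j) ^ 2 ∂μ := by
    intro j
    exact baseline_key μ m hm (W j) X (hWmeas j) hXmeas (hWnonneg j) (hW j) (hWX j)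
      (hWX2 j) (hcondpos j) (fun ω => C ω j)
      ((measurable_pi_apply j).comp hC).stronglyMeasurable
      (hC1 j) (hC2 j) (hC3 j) (hC4 j)
  exact ⟨Finset.sum_le_sum fun j _ => hper j, hper⟩
end

section
/- Let E be a real normed vector space, p : E → ℝ differentiable at θ₀ with p(θ₀) > 0, let p_old > 0 be a constant, and set r(θ) = p(θ)/p_old. Let ε > 0 and A ≥ 0 be real numbers with r(θ₀) ≠ 1+ε, and assume p is continuous in a neighborhood of θ₀. Then the PPO surrogate L(θ) = min( r(θ)·A, max(1−ε, min(r(θ), 1+ε))·A ) is differentiable at θ₀ and its Fréchet derivative equals (if r(θ₀) < 1+ε then A·r(θ₀) else 0) • D(log ∘ p)(θ₀). Equivalently, writing ω = min(r(θ₀), 1+ε), the derivative is ω·𝟙[ω ≠ 1+ε]·A·∇ log p(θ₀). -/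
/-!
On the positive-advantage branch the clipped surrogate collapses to `min r (1 + ε) * A`: the
lower clip `1 - ε` never wins against the unclipped term `r * A`. Away from the kink
`r = 1 + ε`, `min r (1 + ε)` is locally either `r` or the constant `1 + ε`, so its derivative
is `∇r` or `0`, and the log-derivative trick `∇r = r • ∇ log p` gives the stated form.
-/

theorem min_max_min_eq_min {α : Type*} [LinearOrder α] {a b : α} (hab : a ≤ b) (r : α) :
    min r (max a (min r b)) = min r b := by
  rcases le_total r b with hrb | hbr
  · simp [hrb]
  · simp [hbr, hab]

section Calculus

variable {E : Type*} [NormedAddCommGroup E] [NormedSpace ℝ E]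
  {f : E → ℝ} {f' : E →L[ℝ] ℝ} {x : E}

theorem HasFDerivAt.min_const (hf : HasFDerivAt f f' x) {c : ℝ} (hc : f x ≠ c) :
    HasFDerivAt (fun y => min (f y) c) (if f x < c then f' else 0) x := by
  rcases hc.lt_or_gt with hlt | hgt
  · rw [if_pos hlt]
    refine hf.congr_of_eventuallyEq ?_
    filter_upwards [hf.continuousAt.eventually_lt_const hlt] with y hy
    exact min_eq_left hy.le
  · rw [if_neg hgt.not_gt]
    refine (hasFDerivAt_const c x).congr_of_eventuallyEq ?_
    filter_upwards [hf.continuousAt.eventually_const_lt hgt] with y hy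
    exact min_eq_right hy.le

theorem HasFDerivAt.eq_smul_fderiv_log (hf : HasFDerivAt f f' x) (hx : f x ≠ 0) :
    f' = f x • fderiv ℝ (fun y => Real.log (f y)) x := by
  rw [(hf.log hx).fderiv, smul_smul, mul_inv_cancel₀ hx, one_smul]

end Calculus

theorem ppo_clipped_objective_gradient_pos_general
    {E : Type*} [NormedAddCommGroup E] [NormedSpace ℝ E]
    (p : E → ℝ) (θ₀ : E) (hdiff : DifferentiableAt ℝ p θ₀) (hppos : 0 < p θ₀)
    (pold : ℝ)
    (ε A : ℝ) (hε : 0 < ε) (hA : 0 ≤ A)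
    (hne : p θ₀ / pold ≠ 1 + ε) :
    HasFDerivAt
      (fun θ => min (p θ / pold * A)
        (max (1 - ε) (min (p θ / pold) (1 + ε)) * A))
      ((if p θ₀ / pold < 1 + ε then A * (p θ₀ / pold) else 0) •
        fderiv ℝ (fun θ => Real.log (p θ)) θ₀)
      θ₀ := by
  have hsurrogate : ∀ θ, min (p θ / pold * A) (max (1 - ε) (min (p θ / pold) (1 + ε)) * A)
      = min (p θ / pold) (1 + ε) * A := fun θ => by
    rw [← min_mul_of_nonneg _ _ hA, min_max_min_eq_min (by linarith)]
  have hratio : HasFDerivAt (fun θ => p θ / pold)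
      ((p θ₀ / pold) • fderiv ℝ (fun θ => Real.log (p θ)) θ₀) θ₀ := by
    have hp := hdiff.hasFDerivAt
    rw [hp.eq_smul_fderiv_log hppos.ne'] at hp
    simpa only [div_eq_mul_inv, smul_smul, mul_comm _ pold⁻¹] using hp.const_mul pold⁻¹
  simp_rw [hsurrogate]
  refine ((hratio.min_const hne).mul_const A).congr_fderiv ?_
  split_ifs <;> simp [smul_smul]

/-- Gradient of PPO's clipped surrogate, positive-advantage branch: if `A ≥ 0` and the
ratio `r(θ₀) = p(θ₀)/p_old` is not at the clipping boundary `1+ε`, then the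
surrogate is differentiable at `θ₀` with Fréchet derivative
`(if r(θ₀) < 1+ε then A·r(θ₀) else 0) • D(log ∘ p)(θ₀)`;
in particular clipped samples contribute zero gradient. -/
theorem ppo_clipped_objective_gradient_pos
    {E : Type*} [NormedAddCommGroup E] [NormedSpace ℝ E]
    (p : E → ℝ) (θ₀ : E) (hdiff : DifferentiableAt ℝ p θ₀) (hppos : 0 < p θ₀)
    (pold : ℝ) (hpold : 0 < pold)
    (ε A : ℝ) (hε : 0 < ε) (hA : 0 ≤ A)
    (hne : p θ₀ / pold ≠ 1 + ε)
    (hcont : ∃ U ∈ nhds θ₀, ContinuousOn p U) :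
    HasFDerivAt
      (fun θ => min (p θ / pold * A)
        (max (1 - ε) (min (p θ / pold) (1 + ε)) * A))
      ((if p θ₀ / pold < 1 + ε then A * (p θ₀ / pold) else 0) •
        fderiv ℝ (fun θ => Real.log (p θ)) θ₀)
      θ₀ :=
  ppo_clipped_objective_gradient_pos_general p θ₀ hdiff hppos pold ε A hε hA hne
end

section
/- Let E be a real normed vector space, p : E → ℝ differentiable at θ₀ with p(θ₀) > 0, let p_old > 0 be a constant, and set r(θ) = p(θ)/p_old. Let ε ∈ (0,1) and A ≤ 0 be real numbers with r(θ₀) ≠ 1−ε, and assume p is continuous in a neighborhood of θ₀. Then the PPO surrogate L(θ) = min( r(θ)·A, max(1−ε, min(r(θ), 1+ε))·A ) is differentiable at θ₀ and its Fréchet derivative equals (if r(θ₀) > 1−ε then A·r(θ₀) else 0) • D(log ∘ p)(θ₀). Equivalently, writing ω = max(r(θ₀), 1−ε), the derivative is ω·𝟙[ω ≠ 1−ε]·A·∇ log p(θ₀). -/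
/-! Since `A ≤ 0`, multiplying by `A` reverses order, so the outer `min` picks whichever of
`r` and its clipped value is larger. Near a ratio `r(θ₀) > 1 - ε` this is `r(θ)` itself, and near
a ratio `r(θ₀) < 1 - ε` it is the constant `1 - ε`. Hence the scalar surrogate has derivative `A`
or `0` at every ratio other than `1 - ε`, and the chain rule with `D(log ∘ p) = p⁻¹ • Dp` gives
the formula. -/

/-- PPO's clipped surrogate as a function of the importance ratio `x`, with clip range
`[lo, hi]` and advantage `A`. -/
def clippedSurrogate (lo hi A x : ℝ) : ℝ :=
  min (x * A) (max lo (min x hi) * A)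

section clippedSurrogate

variable {lo hi A x : ℝ}

theorem clippedSurrogate_eq_mul_of_lt (hA : A ≤ 0) (hx : lo < x) :
    clippedSurrogate lo hi A x = x * A :=
  min_eq_left <| mul_le_mul_of_nonpos_right (max_le hx.le (min_le_left x hi)) hA

theorem clippedSurrogate_eq_const_of_lt (hA : A ≤ 0) (hx : x < lo) :
    clippedSurrogate lo hi A x = lo * A := by
  have hclip : max lo (min x hi) = lo := max_eq_left ((min_le_left x hi).trans hx.le)
  rw [clippedSurrogate, hclip]
  exact min_eq_right (mul_le_mul_of_nonpos_right hx.le hA)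

theorem hasDerivAt_clippedSurrogate (hA : A ≤ 0) (hx : x ≠ lo) :
    HasDerivAt (clippedSurrogate lo hi A) (if lo < x then A else 0) x := by
  rcases hx.lt_or_gt with hlt | hgt
  · rw [if_neg hlt.not_gt]
    refine (hasDerivAt_const x (lo * A)).congr_of_eventuallyEq ?_
    filter_upwards [eventually_lt_nhds hlt] with y hy
    exact clippedSurrogate_eq_const_of_lt hA hy
  · rw [if_pos hgt]
    refine (hasDerivAt_mul_const A).congr_of_eventuallyEq ?_
    filter_upwards [eventually_gt_nhds hgt] with y hy
    exact clippedSurrogate_eq_mul_of_lt hA hy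

end clippedSurrogate

theorem ppo_clipped_objective_gradient_neg_general
    {E : Type*} [NormedAddCommGroup E] [NormedSpace ℝ E]
    (p : E → ℝ) (θ₀ : E) (hdiff : DifferentiableAt ℝ p θ₀) (hppos : 0 < p θ₀)
    (pold : ℝ)
    (ε A : ℝ) (hA : A ≤ 0)
    (hne : p θ₀ / pold ≠ 1 - ε) :
    HasFDerivAt
      (fun θ => min (p θ / pold * A)
        (max (1 - ε) (min (p θ / pold) (1 + ε)) * A))
      ((if 1 - ε < p θ₀ / pold then A * (p θ₀ / pold) else 0) •
        fderiv ℝ (fun θ => Real.log (p θ)) θ₀)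
      θ₀ := by
  have hp := hdiff.hasFDerivAt
  have hratio : HasFDerivAt (fun θ => p θ / pold) (pold⁻¹ • fderiv ℝ p θ₀) θ₀ := by
    simpa only [div_eq_mul_inv] using hp.mul_const pold⁻¹
  have hchain := (hasDerivAt_clippedSurrogate (hi := 1 + ε) hA hne).comp_hasFDerivAt θ₀ hratio
  rw [(hp.log hppos.ne').fderiv]
  have hcoeff : (if 1 - ε < p θ₀ / pold then A * (p θ₀ / pold) else 0) • (p θ₀)⁻¹ • fderiv ℝ p θ₀
      = (if 1 - ε < p θ₀ / pold then A else 0) • pold⁻¹ • fderiv ℝ p θ₀ := by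
    split_ifs
    · rw [smul_smul, smul_smul]
      congr 1
      field_simp
    · simp only [zero_smul]
  rw [hcoeff]
  exact hchain

/-- Gradient of PPO's clipped surrogate, negative-advantage branch: if `A ≤ 0`,
`ε ∈ (0,1)` and the importance ratio `r(θ₀) = p(θ₀)/p_old` is not at the clipping boundary
`1−ε`, then the surrogate is differentiable at `θ₀` with Fréchet derivative
`(if r(θ₀) > 1−ε then A·r(θ₀) else 0) • D(log ∘ p)(θ₀)`;
in particular clipped samples contribute zero gradient. -/
theorem ppo_clipped_objective_gradient_neg
    {E : Type*} [NormedAddCommGroup E] [NormedSpace ℝ E]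
    (p : E → ℝ) (θ₀ : E) (hdiff : DifferentiableAt ℝ p θ₀) (hppos : 0 < p θ₀)
    (pold : ℝ) (hpold : 0 < pold)
    (ε A : ℝ) (hε : ε ∈ Set.Ioo (0 : ℝ) 1) (hA : A ≤ 0)
    (hne : p θ₀ / pold ≠ 1 - ε)
    (hcont : ∃ U ∈ nhds θ₀, ContinuousOn p U) :
    HasFDerivAt
      (fun θ => min (p θ / pold * A)
        (max (1 - ε) (min (p θ / pold) (1 + ε)) * A))
      ((if 1 - ε < p θ₀ / pold then A * (p θ₀ / pold) else 0) •
        fderiv ℝ (fun θ => Real.log (p θ)) θ₀)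
      θ₀ :=
  ppo_clipped_objective_gradient_neg_general p θ₀ hdiff hppos pold ε A hA hne
end
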